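/- Let f be convex with L_f-Lipschitz gradient, g proper lsc convex, and 0 < γ < 1/L_f. Then x⋆ minimizes φ = f + g if and only if x⋆ minimizes the forward-backward envelope φ_γ. -/

import Mathlib

set_option linter.unusedVariables false
noncomputable section

/-- Euclidean space ℝⁿ. -/
abbrev Eucl (n : ℕ) := EuclideanSpace ℝ (Fin n)

/-- A proper extended-real-valued function: not identically +∞ and nowhere -∞. -/
def ProperFun {n : ℕ} (g : Eucl n → EReal) : Prop := (∃ x, g x ≠ ⊤) ∧ ∀ x, g x ≠ ⊥

/-- Convexity for extended-real-valued functions. -/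
def ConvexFun {n : ℕ} (g : Eucl n → EReal) : Prop :=
  ∀ x y : Eucl n, ∀ a b : ℝ, 0 ≤ a → 0 ≤ b → a + b = 1 →
    g (a • x + b • y) ≤ (a : EReal) * g x + (b : EReal) * g y

/-- `p` is the proximal point `prox_{γ g}(y)`, i.e. it minimizes
`w ↦ g w + (1/(2γ))‖w - y‖²`. -/
def IsProx {n : ℕ} (g : Eucl n → EReal) (γ : ℝ) (y p : Eucl n) : Prop :=
  ∀ w, g p + ((1/(2*γ) * ‖p - y‖^2 : ℝ) : EReal) ≤ g w + ((1/(2*γ) * ‖w - y‖^2 : ℝ) : EReal)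

/-- The Moreau envelope `g^γ(x) = inf_w { g w + (1/(2γ))‖w - x‖² }`. -/
def moreauEnv {n : ℕ} (g : Eucl n → EReal) (γ : ℝ) (x : Eucl n) : EReal :=
  ⨅ w, g w + ((1/(2*γ) * ‖w - x‖^2 : ℝ) : EReal)

/-- The convex subdifferential of an extended-real-valued function. -/
def subdiff {n : ℕ} (φ : Eucl n → EReal) (x : Eucl n) : Set (Eucl n) :=
  {v | ∀ z, φ x + ((inner ℝ v (z - x) : ℝ) : EReal) ≤ φ z}

/-- The forward-backward envelope
`φ_γ(x) = inf_w { f x + ⟨∇f x, w - x⟩ + (1/(2γ))‖w - x‖² + g w }`. -/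
def fbe {n : ℕ} (f : Eucl n → ℝ) (f' : Eucl n → Eucl n) (g : Eucl n → EReal) (γ : ℝ)
    (x : Eucl n) : EReal :=
  ⨅ w, ((f x + (inner ℝ (f' x) (w - x) : ℝ) + 1/(2*γ) * ‖w - x‖^2 : ℝ) : EReal) + g w

/-- The distance (in `EReal`, so `⊤` if the set is empty) from `0` to a set of vectors. -/
def distZero {n : ℕ} (S : Set (Eucl n)) : EReal := ⨅ v ∈ S, ((‖v‖ : ℝ) : EReal)

lemma line_hasDerivAt {n : ℕ} (f : Eucl n → ℝ) (f' : Eucl n → Eucl n)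
    (hgrad : ∀ x, HasGradientAt f (f' x) x) (x d : Eucl n) (t : ℝ) :
    HasDerivAt (fun s : ℝ => f (x + s • d)) (inner ℝ (f' (x + t • d)) d : ℝ) t := by
  have h1 : HasDerivAt (fun s : ℝ => x + s • d) d t := by
    simpa using ((hasDerivAt_id t).smul_const d).const_add x
  have h2 := (hgrad (x + t • d)).hasFDerivAt
  have := h2.comp_hasDerivAt t h1
  exact this

lemma descent_lemma {n : ℕ} (f : Eucl n → ℝ) (f' : Eucl n → Eucl n)
    (hgrad : ∀ x, HasGradientAt f (f' x) x) (Lf : ℝ) (hLf : 0 ≤ Lf)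
    (hlip : LipschitzWith (Real.toNNReal Lf) f') (x y : Eucl n) :
    f y ≤ f x + (inner ℝ (f' x) (y - x) : ℝ) + Lf/2 * ‖y - x‖^2 := by
  set d := y - x with hd
  set ψ : ℝ → ℝ := fun t => f (x + t • d) - t * (inner ℝ (f' x) d : ℝ)
      - t^2 * (Lf/2 * ‖d‖^2) with hψ
  have hder : ∀ t : ℝ, HasDerivAt ψ
      ((inner ℝ (f' (x + t • d)) d : ℝ) - (inner ℝ (f' x) d : ℝ) - t * (Lf * ‖d‖^2)) t := by
    intro t
    have h1 := line_hasDerivAt f f' hgrad x d t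
    have h2 : HasDerivAt (fun t : ℝ => t * (inner ℝ (f' x) d : ℝ)) (inner ℝ (f' x) d : ℝ) t := by
      simpa using (hasDerivAt_id t).mul_const (inner ℝ (f' x) d : ℝ)
    have h3 : HasDerivAt (fun t : ℝ => t^2 * (Lf/2 * ‖d‖^2)) (2 * t * (Lf/2 * ‖d‖^2)) t := by
      simpa using (hasDerivAt_pow 2 t).mul_const (Lf/2 * ‖d‖^2)
    convert (h1.sub h2).sub h3 using 1
    case e'_9 => ring
    all_goals rfl
  have hanti : AntitoneOn ψ (Set.Icc 0 1) := by
    apply antitoneOn_of_deriv_nonpos (convex_Icc 0 1)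
    · exact fun t ht => (hder t).continuousAt.continuousWithinAt
    · exact fun t ht => ((hder t).differentiableAt.differentiableWithinAt)
    · intro t ht
      rw [interior_Icc] at ht
      rw [(hder t).deriv]
      have h4 : (inner ℝ (f' (x + t•d)) d : ℝ) - (inner ℝ (f' x) d : ℝ)
          = (inner ℝ (f' (x + t•d) - f' x) d : ℝ) := by rw [inner_sub_left]
      have h5 : (inner ℝ (f' (x + t•d) - f' x) d : ℝ) ≤ ‖f' (x + t•d) - f' x‖ * ‖d‖ :=
        real_inner_le_norm _ _
      have h6 : ‖f' (x + t•d) - f' x‖ ≤ Lf * (t * ‖d‖) := by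
        have := hlip.dist_le_mul (x + t•d) x
        rw [dist_eq_norm, dist_eq_norm] at this
        simp only [add_sub_cancel_left] at this
        rw [norm_smul] at this
        rw [Real.norm_eq_abs, abs_of_pos ht.1] at this
        rw [Real.coe_toNNReal _ hLf] at this
        linarith [this]
      have hdn : (0:ℝ) ≤ ‖d‖ := norm_nonneg d
      nlinarith [h5, h6, ht.1.le]
  have := hanti (Set.mem_Icc.2 ⟨le_refl 0, zero_le_one⟩)
    (Set.mem_Icc.2 ⟨zero_le_one, le_refl 1⟩) zero_le_one
  have h0 : ψ 0 = f x := by simp [hψ]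
  have h1 : ψ 1 = f y - (inner ℝ (f' x) (y - x) : ℝ) - Lf/2 * ‖y - x‖^2 := by
    simp [hψ, hd]
  rw [h0, h1] at this
  linarith

lemma lsc_bddBelow_compact {n : ℕ} (g : Eucl n → EReal) (hbot : ∀ x, g x ≠ ⊥)
    (hglsc : LowerSemicontinuous g) (K : Set (Eucl n)) (hK : IsCompact K) :
    ∃ M : ℝ, ∀ z ∈ K, (M : EReal) ≤ g z := by
  have hb : ∀ x : Eucl n, ∃ b : ℝ, (b : EReal) < g x := by
    intro x
    obtain ⟨b, hb1, hb2⟩ := EReal.exists_between_coe_real (bot_lt_iff_ne_bot.2 (hbot x))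
    exact ⟨b, hb2⟩
  choose b hbb using hb
  have hU : ∀ x ∈ K, {z | (b x : EReal) < g z} ∈ nhds x := fun x _ => hglsc x (b x) (hbb x)
  obtain ⟨t, ht⟩ := hK.elim_nhds_subcover' (fun x _ => {z | (b x : EReal) < g z}) hU
  set s : Finset ℝ := insert 0 (t.image (fun x => b x.1)) with hs
  have hsne : s.Nonempty := ⟨0, by simp [hs]⟩
  refine ⟨s.min' hsne, fun z hz => ?_⟩
  obtain ⟨x, hxt, hxz⟩ := Set.mem_iUnion₂.1 (ht hz)
  have : s.min' hsne ≤ b x.1 := Finset.min'_le _ _ (by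
    simp only [hs, Finset.mem_insert, Finset.mem_image]
    exact Or.inr ⟨x, hxt, rfl⟩)
  exact le_trans (EReal.coe_le_coe_iff.2 this) (le_of_lt hxz)

lemma g_linear_minorant {n : ℕ} (g : Eucl n → EReal) (hgp : (∃ x, g x ≠ ⊤) ∧ ∀ x, g x ≠ ⊥)
    (hglsc : LowerSemicontinuous g)
    (hgconv : ∀ x y : Eucl n, ∀ a c : ℝ, 0 ≤ a → 0 ≤ c → a + c = 1 →
      g (a • x + c • y) ≤ (a : EReal) * g x + (c : EReal) * g y) :
    ∃ x₀ : Eucl n, ∃ C : ℝ, 0 ≤ C ∧ ∀ w, ((-C * (‖w - x₀‖ + 1) : ℝ) : EReal) ≤ g w := by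
  obtain ⟨x₀, hx₀⟩ := hgp.1
  set A : ℝ := (g x₀).toReal with hA
  have hAe : ((A : ℝ) : EReal) = g x₀ := EReal.coe_toReal hx₀ (hgp.2 x₀)
  obtain ⟨B, hB⟩ := lsc_bddBelow_compact g hgp.2 hglsc (Metric.closedBall x₀ 1)
    (isCompact_closedBall x₀ 1)
  refine ⟨x₀, |A| + |B|, by positivity, fun w => ?_⟩
  set C : ℝ := |A| + |B| with hC
  set R : ℝ := ‖w - x₀‖ with hR
  have hR0 : 0 ≤ R := norm_nonneg _
  by_cases hcase : R ≤ 1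
  · have h1 : (B : EReal) ≤ g w := hB w (by simpa [Metric.mem_closedBall, dist_eq_norm] using hcase)
    refine le_trans (EReal.coe_le_coe_iff.2 ?_) h1
    nlinarith [abs_nonneg A, abs_nonneg B, le_abs_self B, neg_abs_le B]
  · push_neg at hcase
    rcases eq_top_or_lt_top (g w) with htop | hlt
    · rw [htop]; exact le_top
    have hGe : (((g w).toReal : ℝ) : EReal) = g w := EReal.coe_toReal hlt.ne (hgp.2 w)
    set G : ℝ := (g w).toReal with hG
    set t : ℝ := 1 / R with ht
    have ht0 : 0 < t := by positivity
    have ht1 : t < 1 := by rw [ht]; rw [div_lt_one (by linarith)]; linarith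
    have hcv := hgconv x₀ w (1 - t) t (by linarith) ht0.le (by ring)
    have hu : (1 - t) • x₀ + t • w ∈ Metric.closedBall x₀ 1 := by
      rw [Metric.mem_closedBall, dist_eq_norm]
      have : (1 - t) • x₀ + t • w - x₀ = t • (w - x₀) := by module
      rw [this, norm_smul, Real.norm_eq_abs, abs_of_pos ht0, ← hR, ht]
      rw [one_div, inv_mul_cancel₀ (by linarith)]
    have hBu : (B : EReal) ≤ g ((1 - t) • x₀ + t • w) := hB _ hu
    have key : (B : EReal) ≤ (((1 - t) * A + t * G : ℝ) : EReal) := by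
      refine le_trans hBu (le_trans hcv ?_)
      rw [← hAe, ← hGe]
      rw [← EReal.coe_mul, ← EReal.coe_mul, ← EReal.coe_add]
    have hBr : B ≤ (1 - t) * A + t * G := EReal.coe_le_coe_iff.1 key
    rw [← hGe]
    apply EReal.coe_le_coe_iff.2
    have htR : t * R = 1 := by rw [ht]; field_simp
    nlinarith [abs_nonneg A, abs_nonneg B, le_abs_self A, neg_abs_le A, le_abs_self B,
      neg_abs_le B, mul_pos ht0 (lt_trans one_pos hcase)]

/-- `x⋆` minimizes `φ = f + g` iff `x⋆` minimizes the FBE `φ_γ`. -/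
theorem argmin_cost_iff_argmin_fbe {n : ℕ} (f : Eucl n → ℝ) (f' : Eucl n → Eucl n)
    (hconvf : ConvexOn ℝ Set.univ f) (hgrad : ∀ x, HasGradientAt f (f' x) x)
    (Lf : ℝ) (hLf : 0 < Lf) (hlip : LipschitzWith (Real.toNNReal Lf) f')
    (g : Eucl n → EReal) (hgp : ProperFun g) (hglsc : LowerSemicontinuous g)
    (hgconv : ConvexFun g)
    (γ : ℝ) (hγ : 0 < γ) (hγL : γ < 1/Lf) (xstar : Eucl n) :
    (∀ y, (f xstar : EReal) + g xstar ≤ (f y : EReal) + g y) ↔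
    (∀ y, fbe f f' g γ xstar ≤ fbe f f' g γ y) := by
  set F : Eucl n → Eucl n → EReal := fun x w =>
    ((f x + (inner ℝ (f' x) (w - x) : ℝ) + 1/(2*γ) * ‖w - x‖^2 : ℝ) : EReal) + g w with hF
  have hdef : ∀ x, fbe f f' g γ x = ⨅ w, F x w := fun _ => rfl
  set c : ℝ := 1/(2*γ) - Lf/2 with hc
  have hγLf : γ * Lf < 1 := (lt_div_iff₀ hLf).1 hγL
  have hc0 : 0 < c := by
    have h1 : Lf/2 < 1/(2*γ) := by
      rw [div_lt_div_iff₀ (by norm_num) (by positivity)]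
      nlinarith
    simp only [hc]; linarith
  -- Inequality A: descent-lemma lower bound on F
  have ineqA : ∀ x w : Eucl n, ((f w + c * ‖w - x‖^2 : ℝ) : EReal) + g w ≤ F x w := by
    intro x w
    refine add_le_add_left (EReal.coe_le_coe_iff.2 ?_) (g w)
    have := descent_lemma f f' hgrad Lf hLf.le hlip x w
    simp only [hc]; linarith
  have phi_le_F : ∀ x w : Eucl n, ((f w : ℝ) : EReal) + g w ≤ F x w := by
    intro x w
    refine le_trans (add_le_add_left (EReal.coe_le_coe_iff.2 ?_) (g w)) (ineqA x w)
    nlinarith [sq_nonneg ‖w - x‖, norm_nonneg (w - x), hc0]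
  have fbe_le_phi : ∀ x : Eucl n, fbe f f' g γ x ≤ ((f x : ℝ) : EReal) + g x := by
    intro x
    rw [hdef]
    have h := iInf_le (fun w => F x w) x
    refine le_trans h ?_
    apply le_of_eq
    simp only [hF, sub_self, inner_zero_right, norm_zero]
    norm_num
  constructor
  · intro hmin y
    rw [hdef]
    refine le_iInf fun w => ?_
    calc fbe f f' g γ xstar ≤ ((f xstar : ℝ) : EReal) + g xstar := fbe_le_phi xstar
      _ ≤ ((f w : ℝ) : EReal) + g w := hmin w
      _ ≤ F y w := phi_le_F y w
  · intro hmin y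
    have hb_y : fbe f f' g γ xstar ≤ ((f y : ℝ) : EReal) + g y :=
      le_trans (hmin y) (fbe_le_phi y)
    refine le_trans ?_ hb_y
    -- show φ(xstar) ≤ fbe(xstar)
    set a : EReal := fbe f f' g γ xstar with ha
    rcases eq_top_or_lt_top a with htop | hatop
    · rw [htop]; exact le_top
    -- a is not ⊥ : lower bound via linear minorant of g
    obtain ⟨x₀, C, hC0, hCm⟩ := g_linear_minorant g hgp hglsc hgconv
    have habot : a ≠ ⊥ := by
      set k : ℝ := ‖xstar - x₀‖ with hk
      set s : ℝ := ‖f' xstar‖ + C with hs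
      set q : ℝ := 1/(2*γ) with hq
      have hq0 : 0 < q := by positivity
      set M : ℝ := f xstar - s^2/(4*q) - C*(k+1) with hM
      have hlow : ∀ w : Eucl n, (M : EReal) ≤ F xstar w := by
        intro w
        have h1 : ((-C * (‖w - x₀‖ + 1) : ℝ) : EReal) ≤ g w := hCm w
        have h2 : (M : EReal) ≤ ((f xstar + (inner ℝ (f' xstar) (w - xstar) : ℝ)
            + q * ‖w - xstar‖^2 + (-C * (‖w - x₀‖ + 1)) : ℝ) : EReal) := by
          apply EReal.coe_le_coe_iff.2
          set d : ℝ := ‖w - xstar‖ with hd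
          have hd0 : 0 ≤ d := norm_nonneg _
          have hip : -(‖f' xstar‖ * d) ≤ (inner ℝ (f' xstar) (w - xstar) : ℝ) := by
            have := abs_real_inner_le_norm (f' xstar) (w - xstar)
            rw [abs_le] at this
            exact this.1
          have htri : ‖w - x₀‖ ≤ d + k := by
            have : w - x₀ = (w - xstar) + (xstar - x₀) := by abel
            rw [this]; exact norm_add_le _ _
          have hnorm : 0 ≤ ‖f' xstar‖ := norm_nonneg _
          have hdiv : s^2/(4*q)*(4*q) = s^2 := div_mul_cancel₀ _ (by positivity)
          have hquad : -(s^2/(4*q)) ≤ q*d^2 - s*d := by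
            rw [← neg_div, div_le_iff₀ (by positivity : (0:ℝ) < 4*q)]
            nlinarith [sq_nonneg (2*q*d - s)]
          have hCtri : C*‖w - x₀‖ ≤ C*(d+k) := mul_le_mul_of_nonneg_left htri hC0
          simp only [hM, hs] at *
          nlinarith
        calc (M : EReal) ≤ _ := h2
          _ = ((f xstar + (inner ℝ (f' xstar) (w - xstar) : ℝ) + q * ‖w - xstar‖^2 : ℝ) : EReal)
              + ((-C * (‖w - x₀‖ + 1) : ℝ) : EReal) := by rw [← EReal.coe_add]
          _ ≤ F xstar w := add_le_add_right h1 _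
      have : (M : EReal) ≤ a := by rw [ha, hdef]; exact le_iInf hlow
      exact fun hbot => by simp [hbot] at this
    set aR : ℝ := a.toReal with haR
    have haRe : ((aR : ℝ) : EReal) = a := EReal.coe_toReal hatop.ne habot
    by_contra hcon
    push_neg at hcon
    obtain ⟨b, hab, hbphi⟩ := EReal.exists_between_coe_real hcon
    -- lsc neighborhood: φ z > b near xstar
    have hgx : ((b - f xstar : ℝ) : EReal) < g xstar := by
      by_contra hle
      push_neg at hle
      have : (f xstar : EReal) + g xstar ≤ (b : EReal) := by
        calc (f xstar : EReal) + g xstar ≤ (f xstar : EReal) + ((b - f xstar : ℝ) : EReal) :=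
              add_le_add_right hle _
          _ = ((f xstar + (b - f xstar) : ℝ) : EReal) := by rw [← EReal.coe_add]
          _ = (b : EReal) := by norm_num
      exact absurd (lt_of_lt_of_le hbphi this) (lt_irrefl _)
    obtain ⟨η, hη1, hη2⟩ := EReal.exists_between_coe_real hgx
    have hη1' : b - f xstar < η := EReal.coe_lt_coe_iff.1 hη1
    set ρ : ℝ := (η - (b - f xstar))/2 with hρ
    have hρ0 : 0 < ρ := by simp only [hρ]; linarith
    obtain ⟨δ₁, hδ₁, hg_nbhd⟩ := Metric.eventually_nhds_iff.1 (hglsc xstar (η : EReal) hη2)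
    obtain ⟨δ₂, hδ₂, hf_nbhd⟩ := Metric.continuousAt_iff.1 (hgrad xstar).continuousAt ρ hρ0
    set δ : ℝ := min δ₁ δ₂ with hδdef
    have hδ0 : 0 < δ := lt_min hδ₁ hδ₂
    have hball : ∀ z : Eucl n, dist z xstar < δ → (b : EReal) < (f z : EReal) + g z := by
      intro z hz
      have hgz : (η : EReal) < g z := hg_nbhd (lt_of_lt_of_le hz (min_le_left _ _))
      have hfz : |f z - f xstar| < ρ := by
        have := hf_nbhd (lt_of_lt_of_le hz (min_le_right _ _))
        rwa [Real.dist_eq] at this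
      have hfz' : f xstar - ρ < f z := by
        rw [abs_lt] at hfz; linarith
      calc (b : EReal) < ((f z + η : ℝ) : EReal) := by
            apply EReal.coe_lt_coe_iff.2
            simp only [hρ] at hfz'
            linarith
        _ = (f z : EReal) + (η : EReal) := EReal.coe_add _ _
        _ ≤ (f z : EReal) + g z := add_le_add_right hgz.le _
    -- pick w with F xstar w < min b (aR + c δ²)
    set m : ℝ := min b (aR + c * δ^2) with hm
    have ham : a < (m : EReal) := by
      rw [← haRe]
      apply EReal.coe_lt_coe_iff.2
      apply lt_min
      · exact EReal.coe_lt_coe_iff.1 (haRe ▸ hab)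
      · nlinarith [sq_nonneg δ, mul_pos hc0 (mul_pos hδ0 hδ0)]
    have : (⨅ w, F xstar w) < (m : EReal) := by rw [← hdef, ← ha]; exact ham
    obtain ⟨w, hw⟩ := iInf_lt_iff.1 this
    -- key inequality : a + c‖w-xstar‖² ≤ F xstar w
    set s : ℝ := c * ‖w - xstar‖^2 with hsdef
    have hs0 : 0 ≤ s := by positivity
    have hkey : ((aR + s : ℝ) : EReal) ≤ F xstar w := by
      have h1 : a ≤ ((f w : ℝ) : EReal) + g w := le_trans (hmin w) (fbe_le_phi w)
      have h2 : ((aR + s : ℝ) : EReal) ≤ (((f w : ℝ) : EReal) + g w) + ((s:ℝ) : EReal) := by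
        rw [EReal.coe_add]
        exact add_le_add_left (le_of_eq_of_le haRe h1) _
      refine le_trans h2 ?_
      have h3 : (((f w : ℝ) : EReal) + g w) + ((s:ℝ) : EReal)
          = ((f w + s : ℝ) : EReal) + g w := by
        rw [EReal.coe_add, add_right_comm]
      rw [h3]
      exact ineqA xstar w
    have hreal : aR + s < m := by
      have := lt_of_le_of_lt hkey hw
      exact EReal.coe_lt_coe_iff.1 this
    have hwineq : ‖w - xstar‖ < δ := by
      have hsm : s < c * δ^2 := by
        have : aR + s < aR + c * δ^2 := lt_of_lt_of_le hreal (min_le_right _ _)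
        linarith
      by_contra hge
      push_neg at hge
      have : c * δ^2 ≤ s := by
        simp only [hsdef]
        have : δ^2 ≤ ‖w - xstar‖^2 := by nlinarith [norm_nonneg (w - xstar)]
        nlinarith
      linarith
    have hφw : (b : EReal) < (f w : EReal) + g w := by
      apply hball
      rwa [dist_eq_norm]
    have hFb : (b : EReal) ≤ F xstar w := by
      refine le_trans ?_ (phi_le_F xstar w)
      exact hφw.le
    have : (m : EReal) ≤ (b : EReal) := EReal.coe_le_coe_iff.2 (min_le_left _ _)
    exact absurd (lt_of_le_of_lt hFb (lt_of_lt_of_le hw this)) (lt_irrefl _)
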